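/- arXiv:0802.3270 — 3 statements merged into one kernel-verified Lean document; each statement's English description precedes it below -/
import Mathlib

section
/- Let m : (a,b) → ℝ be C¹ with m' = F + c·m² where c : (a,b) → ℝ is continuous and positive, F is integrable on (a,b), and m has finite limits m(a⁺), m(b⁻) at both endpoints. Then c·m² is integrable on (a,b) and m(b⁻) − m(a⁺) ≥ ∫_a^b F, with equality if and only if m ≡ 0 on (a,b). -/
/-!
On a compact subinterval `[x, y] ⊂ (a, b)` the fundamental theorem of calculus gives
`∫_x^y c m² = m y - m x - ∫_x^y F`. As `x ↓ a` and `y ↑ b` the right-hand side converges to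
`m(b⁻) - m(a⁺) - ∫_a^b F`, so the integrals of the nonnegative function `c m²` over an exhaustion
of `(a, b)` stay bounded: `c m²` is integrable and its integral is that limit, hence nonnegative.
It vanishes exactly when the continuous nonnegative `c m²` vanishes on the open interval, i.e.
when `m ≡ 0`, since `c > 0`.
-/

open MeasureTheory Filter Topology Set intervalIntegral

section
variable {a b : ℝ}

lemma exists_seq_mem_Ioo_tendsto_endpoints (hab : a < b) :
    ∃ A B : ℕ → ℝ, (∀ n, A n ∈ Ioo a b ∧ B n ∈ Ioo a b ∧ A n ≤ B n) ∧
      Tendsto A atTop (𝓝 a) ∧ Tendsto B atTop (𝓝 b) := by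
  obtain ⟨A, -, hAmem, hA⟩ := exists_seq_strictAnti_tendsto' (by linarith : a < (a + b) / 2)
  obtain ⟨B, -, hBmem, hB⟩ := exists_seq_strictMono_tendsto' (by linarith : (a + b) / 2 < b)
  refine ⟨A, B, fun n => ?_, hA, hB⟩
  obtain ⟨hA₁, hA₂⟩ := hAmem n
  obtain ⟨hB₁, hB₂⟩ := hBmem n
  exact ⟨⟨hA₁, by linarith⟩, ⟨by linarith, hB₂⟩, by linarith⟩

lemma tendsto_intervalIntegral_of_tendsto_endpoints {E : Type*} [NormedAddCommGroup E]
    [NormedSpace ℝ E] {f : ℝ → E} (hf : IntervalIntegrable f volume a b)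
    {ι : Type*} {l : Filter ι} {A B : ι → ℝ} (hAmem : ∀ᶠ i in l, A i ∈ uIcc a b)
    (hBmem : ∀ᶠ i in l, B i ∈ uIcc a b) (hA : Tendsto A l (𝓝 a)) (hB : Tendsto B l (𝓝 b)) :
    Tendsto (fun i => ∫ x in A i..B i, f x) l (𝓝 (∫ x in a..b, f x)) := by
  have hprim := continuousOn_primitive_interval' hf left_mem_uIcc
  have hlimA := (hprim a left_mem_uIcc).tendsto.comp (tendsto_nhdsWithin_iff.mpr ⟨hA, hAmem⟩)
  have hlimB := (hprim b right_mem_uIcc).tendsto.comp (tendsto_nhdsWithin_iff.mpr ⟨hB, hBmem⟩)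
  simp only [integral_same] at hlimA
  refine (by simpa using hlimB.sub hlimA : Tendsto _ l _).congr' ?_
  filter_upwards [hAmem, hBmem] with i hAi hBi
  exact integral_interval_sub_left (hf.mono_set (uIcc_subset_uIcc left_mem_uIcc hBi))
    (hf.mono_set (uIcc_subset_uIcc left_mem_uIcc hAi))

lemma intervalIntegral_eq_sub_of_hasDerivAt_add {m F g : ℝ → ℝ}
    (hderiv : ∀ r ∈ Ioo a b, HasDerivAt m (F r + g r) r) (hF : IntegrableOn F (Ioo a b))
    (hg : ContinuousOn g (Ioo a b)) {x y : ℝ} (hx : x ∈ Ioo a b) (hy : y ∈ Ioo a b) :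
    ∫ r in x..y, g r = m y - m x - ∫ r in x..y, F r := by
  have hxy : uIcc x y ⊆ Ioo a b := ordConnected_Ioo.uIcc_subset hx hy
  have hFi : IntervalIntegrable F volume x y := (hF.mono_set hxy).intervalIntegrable
  have hgi : IntervalIntegrable g volume x y := (hg.mono hxy).intervalIntegrable
  have hFTC := integral_eq_sub_of_hasDerivAt (fun r hr => hderiv r (hxy hr)) (hFi.add hgi)
  rw [integral_add hFi hgi] at hFTC
  linarith

lemma integrableOn_Ioo_of_nonneg_of_tendsto_intervalIntegral {g : ℝ → ℝ}
    (hg : ContinuousOn g (Ioo a b)) (hg0 : ∀ r ∈ Ioo a b, 0 ≤ g r)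
    {ι : Type*} {l : Filter ι} [l.NeBot] [l.IsCountablyGenerated] {A B : ι → ℝ}
    (hAB : ∀ i, A i ∈ Ioo a b ∧ B i ∈ Ioo a b ∧ A i ≤ B i)
    (hA : Tendsto A l (𝓝 a)) (hB : Tendsto B l (𝓝 b)) {L : ℝ}
    (hL : Tendsto (fun i => ∫ r in A i..B i, g r) l (𝓝 L)) :
    IntegrableOn g (Ioo a b) := by
  have hsub : ∀ i, Icc (A i) (B i) ⊆ Ioo a b := fun i =>
    ordConnected_Ioo.out (hAB i).1 (hAB i).2.1
  obtain ⟨I, hI⟩ := hL.isBoundedUnder_le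
  rw [← integrableOn_Ioc_iff_integrableOn_Ioo]
  refine integrableOn_Ioc_of_intervalIntegral_norm_bounded (I := I)
    (fun i => ((hg.mono (hsub i)).integrableOn_Icc).mono_set Ioc_subset_Icc_self) hA hB ?_
  filter_upwards [hI] with i (hi : ∫ r in A i..B i, g r ≤ I)
  rw [integral_of_le (hAB i).2.2] at hi
  refine le_of_eq_of_le (setIntegral_congr_fun measurableSet_Ioc fun r hr => ?_) hi
  exact Real.norm_of_nonneg (hg0 r (hsub i (Ioc_subset_Icc_self hr)))

theorem integrableOn_Ioo_and_integral_eq_of_hasDerivAt_add (hab : a < b) {m F g : ℝ → ℝ}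
    {ma mb : ℝ} (hderiv : ∀ r ∈ Ioo a b, HasDerivAt m (F r + g r) r)
    (hF : IntegrableOn F (Ioo a b)) (hg : ContinuousOn g (Ioo a b))
    (hg0 : ∀ r ∈ Ioo a b, 0 ≤ g r) (hma : Tendsto m (𝓝[>] a) (𝓝 ma))
    (hmb : Tendsto m (𝓝[<] b) (𝓝 mb)) :
    IntegrableOn g (Ioo a b) ∧ ∫ r in Ioo a b, g r = mb - ma - ∫ r in Ioo a b, F r := by
  obtain ⟨A, B, hAB, hA, hB⟩ := exists_seq_mem_Ioo_tendsto_endpoints hab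
  have hIoo : Ioo a b ⊆ uIcc a b := Ioo_subset_Icc_self.trans Icc_subset_uIcc
  have hAmem : ∀ᶠ n in atTop, A n ∈ uIcc a b := .of_forall fun n => hIoo (hAB n).1
  have hBmem : ∀ᶠ n in atTop, B n ∈ uIcc a b := .of_forall fun n => hIoo (hAB n).2.1
  have hmA : Tendsto (m ∘ A) atTop (𝓝 ma) :=
    hma.comp (tendsto_nhdsWithin_iff.mpr ⟨hA, .of_forall fun n => (hAB n).1.1⟩)
  have hmB : Tendsto (m ∘ B) atTop (𝓝 mb) :=
    hmb.comp (tendsto_nhdsWithin_iff.mpr ⟨hB, .of_forall fun n => (hAB n).2.1.2⟩)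
  have hFi : IntervalIntegrable F volume a b :=
    (intervalIntegrable_iff_integrableOn_Ioo_of_le hab.le).mpr hF
  have hlim : Tendsto (fun n => ∫ r in A n..B n, g r) atTop (𝓝 (mb - ma - ∫ r in a..b, F r)) :=
    ((hmB.sub hmA).sub (tendsto_intervalIntegral_of_tendsto_endpoints hFi hAmem hBmem hA hB)).congr
      fun n => (intervalIntegral_eq_sub_of_hasDerivAt_add hderiv hF hg (hAB n).1 (hAB n).2.1).symm
  have hgi : IntegrableOn g (Ioo a b) :=
    integrableOn_Ioo_of_nonneg_of_tendsto_intervalIntegral hg hg0 hAB hA hB hlim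
  have hval := tendsto_nhds_unique (tendsto_intervalIntegral_of_tendsto_endpoints
    ((intervalIntegrable_iff_integrableOn_Ioo_of_le hab.le).mpr hgi) hAmem hBmem hA hB) hlim
  simp only [integral_of_le hab.le, integral_Ioc_eq_integral_Ioo] at hval
  exact ⟨hgi, hval⟩

end

lemma setIntegral_eq_zero_iff_eqOn_zero {X : Type*} [TopologicalSpace X] [MeasurableSpace X]
    [OpensMeasurableSpace X] {μ : Measure X} [μ.IsOpenPosMeasure] {U : Set X} (hU : IsOpen U)
    {f : X → ℝ} (hf : ContinuousOn f U) (hf0 : ∀ x ∈ U, 0 ≤ f x) (hfi : IntegrableOn f U μ) :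
    ∫ x in U, f x ∂μ = 0 ↔ EqOn f 0 U := by
  rw [setIntegral_eq_zero_iff_of_nonneg_ae
    ((ae_restrict_iff' hU.measurableSet).mpr (ae_of_all _ hf0)) hfi]
  exact ⟨fun h => Measure.eqOn_open_of_ae_eq h hU hf continuousOn_const,
    fun h => (ae_restrict_iff' hU.measurableSet).mpr (ae_of_all _ h)⟩

/-- If `m' = F + c m²` on `(a,b)` with `c` continuous positive, `F` integrable,
and `m` has finite one-sided limits `ma`, `mb` at the endpoints, then `c m²` is
integrable and `mb - ma ≥ ∫ F`, with equality iff `m ≡ 0`. -/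
theorem stmt2 (a b : ℝ) (hab : a < b) (m F c : ℝ → ℝ)
    (hderiv : ∀ r ∈ Set.Ioo a b, HasDerivAt m (F r + c r * m r ^ 2) r)
    (hccont : ContinuousOn c (Set.Ioo a b))
    (hcpos : ∀ r ∈ Set.Ioo a b, 0 < c r)
    (hFint : IntegrableOn F (Set.Ioo a b))
    (ma mb : ℝ)
    (hma : Tendsto m (nhdsWithin a (Set.Ioi a)) (nhds ma))
    (hmb : Tendsto m (nhdsWithin b (Set.Iio b)) (nhds mb)) :
    IntegrableOn (fun r => c r * m r ^ 2) (Set.Ioo a b) ∧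
    mb - ma ≥ (∫ r in Set.Ioo a b, F r) ∧
    (mb - ma = (∫ r in Set.Ioo a b, F r) ↔ ∀ r ∈ Set.Ioo a b, m r = 0) := by
  have hmcont : ContinuousOn m (Ioo a b) :=
    fun r hr => (hderiv r hr).continuousAt.continuousWithinAt
  have hgcont : ContinuousOn (fun r => c r * m r ^ 2) (Ioo a b) := hccont.mul (hmcont.pow 2)
  have hg0 : ∀ r ∈ Ioo a b, 0 ≤ c r * m r ^ 2 :=
    fun r hr => mul_nonneg (hcpos r hr).le (sq_nonneg _)
  obtain ⟨hgi, hval⟩ := integrableOn_Ioo_and_integral_eq_of_hasDerivAt_add hab hderiv hFint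
    hgcont hg0 hma hmb
  have hzero := setIntegral_eq_zero_iff_eqOn_zero isOpen_Ioo hgcont hg0 hgi
  refine ⟨hgi, by linarith [setIntegral_nonneg (μ := volume) measurableSet_Ioo hg0], ?_⟩
  rw [← sub_eq_zero (b := ∫ r in Ioo a b, F r), ← hval, hzero]
  refine forall₂_congr fun r hr => ?_
  simp [(hcpos r hr).ne']
end

section
/- Let f : [a, ∞) → ℝ be C¹ and bounded, and suppose 2f(r) − f'(r) converges to a limit L as r → ∞. Then f(r) → L/2 and f'(r) → 0 as r → ∞. -/
open Filter Topology

/-!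
With `c > 0` and `m ≤ g' - c g` on `[R, ∞)`, the function `e^{-ct} (g t + m / c)` has derivative
`e^{-ct} (g' - c g - m) ≥ 0`, so it is monotone there; it tends to `0` because `g` is bounded.
Hence it is `≤ 0`, i.e. `g ≤ -m / c` on `[R, ∞)`. Applied to `g` and `-g` this squeezes `g`
to `-m / c` when `g' - c g → m`. For `c = 2`, `m = -L` this gives `f → L / 2`, and then
`f' = 2 f - (2 f - f') → 0`.
-/

section

variable {g : ℝ → ℝ} {c m : ℝ}

theorem le_neg_div_of_le_deriv_sub_mul (hc : 0 < c) (hg : Differentiable ℝ g)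
    (hbdd : IsBoundedUnder (· ≤ ·) atTop fun t => |g t|) {R : ℝ}
    (hm : ∀ t ≥ R, m ≤ deriv g t - c * g t) {r : ℝ} (hr : R ≤ r) :
    g r ≤ -m / c := by
  set v : ℝ → ℝ := fun t => Real.exp (-(c * t)) * (g t + m / c)
  have hexp : Tendsto (fun t => Real.exp (-(c * t))) atTop (𝓝 0) :=
    Real.tendsto_exp_neg_atTop_nhds_zero.comp (tendsto_id.const_mul_atTop hc)
  have hv_lim : Tendsto v atTop (𝓝 0) := by
    have h := (hexp.zero_mul_isBoundedUnder_le hbdd).add (hexp.const_mul (m / c))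
    simp only [mul_zero, add_zero] at h
    exact h.congr fun t => by ring
  have hv_deriv : ∀ t, HasDerivAt v (Real.exp (-(c * t)) * (deriv g t - c * g t - m)) t := by
    intro t
    have h := ((hasDerivAt_id' t).const_mul c).fun_neg.exp.fun_mul
      ((hg t).hasDerivAt.add_const (m / c))
    refine h.congr_deriv ?_
    field_simp
    ring
  have hv_mono : MonotoneOn v (Set.Ici R) := by
    refine monotoneOn_of_hasDerivWithinAt_nonneg (convex_Ici R)
      (fun t _ => (hv_deriv t).continuousAt.continuousWithinAt)
      (fun t _ => (hv_deriv t).hasDerivWithinAt) fun t ht => ?_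
    rw [interior_Ici] at ht
    exact mul_nonneg (Real.exp_pos _).le (sub_nonneg.2 (hm t (le_of_lt ht)))
  have hv_nonpos : v r ≤ 0 :=
    ge_of_tendsto hv_lim <| (eventually_ge_atTop r).mono fun s hs =>
      hv_mono (Set.mem_Ici.2 hr) (Set.mem_Ici.2 (hr.trans hs)) hs
  have hsum_nonpos : g r + m / c ≤ 0 :=
    nonpos_of_mul_nonpos_right hv_nonpos (Real.exp_pos _)
  rw [neg_div]
  linarith

theorem eventually_lt_of_tendsto_deriv_sub_mul (hc : 0 < c) (hg : Differentiable ℝ g)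
    (hbdd : IsBoundedUnder (· ≤ ·) atTop fun t => |g t|)
    (hlim : Tendsto (fun t => deriv g t - c * g t) atTop (𝓝 m)) {b : ℝ} (hb : -m / c < b) :
    ∀ᶠ t in atTop, g t < b := by
  obtain ⟨m', hm'_lt, hm'_m⟩ : ∃ m', -(c * b) < m' ∧ m' < m := by
    refine exists_between ?_
    rw [neg_div, neg_lt] at hb
    linarith [(lt_div_iff₀ hc).1 hb]
  obtain ⟨R, hR⟩ := eventually_atTop.1 ((tendsto_order.1 hlim).1 m' hm'_m)
  filter_upwards [eventually_ge_atTop R] with r hr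
  calc g r ≤ -m' / c := le_neg_div_of_le_deriv_sub_mul hc hg hbdd (fun t ht => (hR t ht).le) hr
    _ < b := by rw [neg_div, neg_lt, lt_div_iff₀ hc]; linarith

theorem tendsto_of_tendsto_deriv_sub_mul (hc : 0 < c) (hg : Differentiable ℝ g)
    (hbdd : IsBoundedUnder (· ≤ ·) atTop fun t => |g t|)
    (hlim : Tendsto (fun t => deriv g t - c * g t) atTop (𝓝 m)) :
    Tendsto g atTop (𝓝 (-m / c)) := by
  have hlim_neg : Tendsto (fun t => deriv (-g) t - c * (-g) t) atTop (𝓝 (-m)) :=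
    hlim.neg.congr fun t => by rw [deriv.neg, Pi.neg_apply]; ring
  have hbdd_neg : IsBoundedUnder (· ≤ ·) atTop fun t => |(-g) t| := by
    simpa only [Pi.neg_apply, abs_neg] using hbdd
  refine tendsto_order.2
    ⟨fun a ha => ?_, fun b hb => eventually_lt_of_tendsto_deriv_sub_mul hc hg hbdd hlim hb⟩
  have h := eventually_lt_of_tendsto_deriv_sub_mul hc hg.neg hbdd_neg hlim_neg
    (b := -a) (by rw [neg_neg, lt_neg, ← neg_div]; exact ha)
  exact h.mono fun t ht => neg_lt_neg_iff.1 ht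

end

/-- If `f` is `C¹` and bounded on `[a,∞)` and `2f - f'` tends to `L` at `+∞`,
then `f → L/2` and `f' → 0` at `+∞`. -/
theorem stmt11 (a : ℝ) (f : ℝ → ℝ) (hf : ContDiff ℝ 1 f)
    (hbdd : ∃ C : ℝ, ∀ r ∈ Set.Ici a, |f r| ≤ C)
    (L : ℝ)
    (hlim : Tendsto (fun r => 2 * f r - deriv f r) atTop (nhds L)) :
    Tendsto f atTop (nhds (L / 2)) ∧ Tendsto (deriv f) atTop (nhds 0) := by
  obtain ⟨C, hC⟩ := hbdd
  have hf_bdd : IsBoundedUnder (· ≤ ·) atTop fun t => |f t| :=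
    isBoundedUnder_of_eventually_le ((eventually_ge_atTop a).mono hC)
  have hf_lim : Tendsto f atTop (𝓝 (L / 2)) := by
    have h := tendsto_of_tendsto_deriv_sub_mul two_pos (hf.differentiable one_ne_zero) hf_bdd
      (hlim.neg.congr fun t => by ring)
    rwa [neg_neg] at h
  refine ⟨hf_lim, ?_⟩
  have h := (hf_lim.const_mul 2).sub hlim
  rw [mul_div_cancel₀ L two_ne_zero, sub_self] at h
  exact h.congr fun t => by ring
end

section
/- Let h, h0 : (a,b) → ℝ be smooth positive with K = −h''/h ≥ K0 = −h0''/h0 on (a,b), and let m = −h0² (ln(h/h0))'. Then m is nondecreasing on (a,b); moreover m is constant if and only if K ≡ K0 and m ≡ 0, in which case h/h0 is constant on (a,b). -/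
/-- If `K = -h''/h ≥ K0 = -h0''/h0` on `(a,b)` and `m = -h0² (ln(h/h0))'`, then
`m` is nondecreasing; moreover `m` is constant iff `K ≡ K0` and `m ≡ 0`, in
which case `h/h0` is constant. -/
theorem stmt19 (a b : ℝ) (h h0 : ℝ → ℝ)
    (hsmooth : ContDiff ℝ (⊤ : ℕ∞) h) (h0smooth : ContDiff ℝ (⊤ : ℕ∞) h0)
    (hpos : ∀ r ∈ Set.Ioo a b, 0 < h r) (h0pos : ∀ r ∈ Set.Ioo a b, 0 < h0 r)
    (hK : ∀ r ∈ Set.Ioo a b,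
      -(deriv (deriv h) r) / h r ≥ -(deriv (deriv h0) r) / h0 r)
    (m : ℝ → ℝ)
    (hm : ∀ r ∈ Set.Ioo a b,
      m r = -(h0 r) ^ 2 * deriv (fun t => Real.log (h t / h0 t)) r) :
    MonotoneOn m (Set.Ioo a b) ∧
    ((∃ C : ℝ, ∀ r ∈ Set.Ioo a b, m r = C) ↔
      ((∀ r ∈ Set.Ioo a b,
          -(deriv (deriv h) r) / h r = -(deriv (deriv h0) r) / h0 r) ∧
        (∀ r ∈ Set.Ioo a b, m r = 0))) ∧
    ((∃ C : ℝ, ∀ r ∈ Set.Ioo a b, m r = C) →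
      ∃ c : ℝ, ∀ r ∈ Set.Ioo a b, h r / h0 r = c) := by
  have hSopen : IsOpen (Set.Ioo a b) := isOpen_Ioo
  have hdh : Differentiable ℝ h := hsmooth.differentiable (by simp)
  have hdh0 : Differentiable ℝ h0 := h0smooth.differentiable (by simp)
  have hdd : Differentiable ℝ (deriv h) :=
    ((contDiff_infty_iff_deriv.mp (hsmooth.of_le (by simp))).2).differentiable (by simp)
  have hdd0 : Differentiable ℝ (deriv h0) :=
    ((contDiff_infty_iff_deriv.mp (h0smooth.of_le (by simp))).2).differentiable (by simp)
  set L : ℝ → ℝ := fun t => Real.log (h t / h0 t) with hLdef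
  -- derivative of the log quotient
  have Hlog : ∀ r ∈ Set.Ioo a b,
      HasDerivAt L (deriv h r / h r - deriv h0 r / h0 r) r := by
    intro r hr
    have hne : h r ≠ 0 := (hpos r hr).ne'
    have h0ne : h0 r ≠ 0 := (h0pos r hr).ne'
    have Hd := (hdh r).hasDerivAt.div (hdh0 r).hasDerivAt h0ne
    have := Hd.log (div_ne_zero hne h0ne)
    convert this using 1
    · rfl
    simp only [Pi.div_apply]
    field_simp
  set F : ℝ → ℝ := fun t => deriv h0 t * h0 t - h0 t ^ 2 * (deriv h t / h t) with hFdef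
  set G : ℝ → ℝ := fun t =>
    h0 t ^ 2 * (-(deriv (deriv h) t) / h t - -(deriv (deriv h0) t) / h0 t)
      + h0 t ^ 2 * (deriv h t / h t - deriv h0 t / h0 t) ^ 2 with hGdef
  have key : ∀ r ∈ Set.Ioo a b, HasDerivAt F (G r) r := by
    intro r hr
    have hne : h r ≠ 0 := (hpos r hr).ne'
    have h0ne : h0 r ≠ 0 := (h0pos r hr).ne'
    have A := (hdd0 r).hasDerivAt.mul (hdh0 r).hasDerivAt
    have B := (hdh0 r).hasDerivAt.pow 2
    have Cq := (hdd r).hasDerivAt.div (hdh r).hasDerivAt hne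
    have D := B.mul Cq
    have E := A.sub D
    convert E using 1
    · rfl
    · rfl
    · rfl
    simp only [hGdef, Pi.div_apply, Pi.pow_apply]
    field_simp
    ring
  have hmF : ∀ r ∈ Set.Ioo a b, m r = F r := by
    intro r hr
    have hne : h r ≠ 0 := (hpos r hr).ne'
    have h0ne : h0 r ≠ 0 := (h0pos r hr).ne'
    rw [hm r hr, (Hlog r hr).deriv]
    simp only [hFdef]
    field_simp
    ring
  have hGnonneg : ∀ r ∈ Set.Ioo a b, 0 ≤ G r := by
    intro r hr
    have h1 : (0:ℝ) ≤ h0 r ^ 2 * (-(deriv (deriv h) r) / h r - -(deriv (deriv h0) r) / h0 r) :=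
      mul_nonneg (sq_nonneg _) (sub_nonneg.mpr (hK r hr))
    have h2 : (0:ℝ) ≤ h0 r ^ 2 * (deriv h r / h r - deriv h0 r / h0 r) ^ 2 :=
      mul_nonneg (sq_nonneg _) (sq_nonneg _)
    simpa only [hGdef] using add_nonneg h1 h2
  have hFdiff : ∀ r ∈ Set.Ioo a b, DifferentiableAt ℝ F r :=
    fun r hr => (key r hr).differentiableAt
  have monoF : MonotoneOn F (Set.Ioo a b) := by
    apply monotoneOn_of_deriv_nonneg (convex_Ioo a b)
    · exact fun r hr => (hFdiff r hr).continuousAt.continuousWithinAt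
    · intro r hr
      rw [hSopen.interior_eq] at hr
      exact (hFdiff r hr).differentiableWithinAt
    · intro r hr
      rw [hSopen.interior_eq] at hr
      rw [(key r hr).deriv]
      exact hGnonneg r hr
  have monoM : MonotoneOn m (Set.Ioo a b) := by
    intro x hx y hy hxy
    rw [hmF x hx, hmF y hy]
    exact monoF hx hy hxy
  -- if m is constant then G = 0 on the interval
  have hGzero : (∃ C : ℝ, ∀ r ∈ Set.Ioo a b, m r = C) → ∀ r ∈ Set.Ioo a b, G r = 0 := by
    rintro ⟨C, hC⟩ r hr
    have heq : F =ᶠ[nhds r] fun _ => C := by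
      filter_upwards [hSopen.mem_nhds hr] with t ht
      rw [← hmF t ht, hC t ht]
    have : deriv F r = 0 := by rw [heq.deriv_eq, deriv_const]
    rw [← (key r hr).deriv]
    exact this
  have hiff : (∃ C : ℝ, ∀ r ∈ Set.Ioo a b, m r = C) ↔
      ((∀ r ∈ Set.Ioo a b,
          -(deriv (deriv h) r) / h r = -(deriv (deriv h0) r) / h0 r) ∧
        (∀ r ∈ Set.Ioo a b, m r = 0)) := by
    constructor
    · intro hconst
      have hG0 := hGzero hconst
      constructor
      · intro r hr
        have h0ne : h0 r ≠ 0 := (h0pos r hr).ne'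
        have h1 : (0:ℝ) ≤ h0 r ^ 2 * (-(deriv (deriv h) r) / h r - -(deriv (deriv h0) r) / h0 r) :=
          mul_nonneg (sq_nonneg _) (sub_nonneg.mpr (hK r hr))
        have h2 : (0:ℝ) ≤ h0 r ^ 2 * (deriv h r / h r - deriv h0 r / h0 r) ^ 2 :=
          mul_nonneg (sq_nonneg _) (sq_nonneg _)
        have hsum : h0 r ^ 2 * (-(deriv (deriv h) r) / h r - -(deriv (deriv h0) r) / h0 r)
            + h0 r ^ 2 * (deriv h r / h r - deriv h0 r / h0 r) ^ 2 = 0 := hG0 r hr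
        have ht1 : h0 r ^ 2 * (-(deriv (deriv h) r) / h r - -(deriv (deriv h0) r) / h0 r) = 0 := by
          linarith
        have h0sq : h0 r ^ 2 ≠ 0 := pow_ne_zero 2 h0ne
        have := (mul_eq_zero.mp ht1).resolve_left h0sq
        linarith
      · intro r hr
        have h0ne : h0 r ≠ 0 := (h0pos r hr).ne'
        have h1 : (0:ℝ) ≤ h0 r ^ 2 * (-(deriv (deriv h) r) / h r - -(deriv (deriv h0) r) / h0 r) :=
          mul_nonneg (sq_nonneg _) (sub_nonneg.mpr (hK r hr))
        have h2 : (0:ℝ) ≤ h0 r ^ 2 * (deriv h r / h r - deriv h0 r / h0 r) ^ 2 :=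
          mul_nonneg (sq_nonneg _) (sq_nonneg _)
        have hsum : h0 r ^ 2 * (-(deriv (deriv h) r) / h r - -(deriv (deriv h0) r) / h0 r)
            + h0 r ^ 2 * (deriv h r / h r - deriv h0 r / h0 r) ^ 2 = 0 := hG0 r hr
        have ht2 : h0 r ^ 2 * (deriv h r / h r - deriv h0 r / h0 r) ^ 2 = 0 := by linarith
        have h0sq : h0 r ^ 2 ≠ 0 := pow_ne_zero 2 h0ne
        have hsq := (mul_eq_zero.mp ht2).resolve_left h0sq
        have hdz : deriv h r / h r - deriv h0 r / h0 r = 0 := by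
          exact pow_eq_zero_iff (two_ne_zero) |>.mp hsq
        rw [hm r hr, (Hlog r hr).deriv, hdz, mul_zero]
    · rintro ⟨_, hm0⟩
      exact ⟨0, hm0⟩
  refine ⟨monoM, hiff, ?_⟩
  intro hconst
  have hm0 := (hiff.mp hconst).2
  -- deriv of L is zero on the interval
  have hL0 : ∀ r ∈ Set.Ioo a b, deriv h r / h r - deriv h0 r / h0 r = 0 := by
    intro r hr
    have h0ne : h0 r ≠ 0 := (h0pos r hr).ne'
    have := hm r hr
    rw [hm0 r hr, (Hlog r hr).deriv] at this
    have h0sq : -(h0 r ^ 2) ≠ 0 := neg_ne_zero.mpr (pow_ne_zero 2 h0ne)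
    rcases mul_eq_zero.mp this.symm with h1 | h2
    · exact absurd h1 h0sq
    · exact h2
  have hLmono : MonotoneOn L (Set.Ioo a b) := by
    apply monotoneOn_of_deriv_nonneg (convex_Ioo a b)
    · exact fun r hr => (Hlog r hr).differentiableAt.continuousAt.continuousWithinAt
    · intro r hr
      rw [hSopen.interior_eq] at hr
      exact (Hlog r hr).differentiableAt.differentiableWithinAt
    · intro r hr
      rw [hSopen.interior_eq] at hr
      rw [(Hlog r hr).deriv, hL0 r hr]
  have hLanti : AntitoneOn L (Set.Ioo a b) := by
    apply antitoneOn_of_deriv_nonpos (convex_Ioo a b)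
    · exact fun r hr => (Hlog r hr).differentiableAt.continuousAt.continuousWithinAt
    · intro r hr
      rw [hSopen.interior_eq] at hr
      exact (Hlog r hr).differentiableAt.differentiableWithinAt
    · intro r hr
      rw [hSopen.interior_eq] at hr
      rw [(Hlog r hr).deriv, hL0 r hr]
  by_cases hab : a < b
  · set r0 : ℝ := (a + b) / 2 with hr0def
    have hr0 : r0 ∈ Set.Ioo a b := ⟨by linarith, by linarith⟩
    refine ⟨h r0 / h0 r0, fun r hr => ?_⟩
    have hLeq : L r = L r0 := by
      rcases le_total r r0 with hle | hle
      · exact le_antisymm (hLmono hr hr0 hle) (hLanti hr hr0 hle)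
      · exact le_antisymm (hLanti hr0 hr hle) (hLmono hr0 hr hle)
    have hpos1 : 0 < h r / h0 r := div_pos (hpos r hr) (h0pos r hr)
    have hpos2 : 0 < h r0 / h0 r0 := div_pos (hpos r0 hr0) (h0pos r0 hr0)
    have : Real.exp (L r) = Real.exp (L r0) := by rw [hLeq]
    rwa [hLdef, Real.exp_log hpos1, Real.exp_log hpos2] at this
  · refine ⟨0, fun r hr => ?_⟩
    rw [Set.Ioo_eq_empty hab] at hr
    exact absurd hr (Set.notMem_empty r)
end
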